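/- Let F be a field and let A be an associative F-algebra generated by T_s, T_t satisfying (T_s−1)(T_s+q_s)=0 and (T_t−1)(T_t+q_t)=0 where q_s, q_t ∈ F are nonzero and distinct, together with the braid relation (T_s T_t T_s ⋯)_m = (T_t T_s T_t ⋯)_m for an odd integer m ≥ 3. Then T_s = T_t = 1 in A. -/

import Mathlib

/-!
Let `w = (T_s T_t T_s ⋯)_m`. Since `m` is odd, the braid relation gives `T_s w = w T_t`, and `w`
is invertible because each generator is: `T (T + q - 1) = q` with `q ≠ 0`. Conjugating the
quadratic relation of `T_t` by `w` shows that `T_s` satisfies both `(T_s - 1)(T_s + q_s) = 0` and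
`(T_s - 1)(T_s + q_t) = 0`; their difference is `(q_t - q_s)(T_s - 1) = 0`, so `T_s = 1`, and then
`T_t = w⁻¹ T_s w = 1`.
-/

/-- The alternating product `(a b a ⋯)` with `n` factors, starting with `a`. -/
def altProd {A : Type*} [Monoid A] (a b : A) (n : ℕ) : A :=
  ((List.range n).map (fun i => if Even i then a else b)).prod

section altProd

variable {M : Type*} [Monoid M]

theorem altProd_succ_left (a b : M) (n : ℕ) : altProd a b (n + 1) = a * altProd b a n := by
  simp only [altProd, List.range_succ_eq_map, List.map_cons, List.prod_cons, List.map_map,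
    if_pos Even.zero]
  congr 3
  funext i
  by_cases h : Even i <;> simp [h, Nat.even_add_one]

theorem altProd_succ_right (a b : M) (n : ℕ) :
    altProd a b (n + 1) = altProd a b n * if Even n then a else b :=
  List.prod_range_succ _ n

theorem IsUnit.altProd {a b : M} (ha : IsUnit a) (hb : IsUnit b) (n : ℕ) :
    IsUnit (altProd a b n) := by
  induction n generalizing a b with
  | zero => exact isUnit_one
  | succ n ih => rw [altProd_succ_left]; exact ha.mul (ih hb ha)

theorem semiconjBy_altProd_of_braid {a b : M} {m : ℕ} (hm : Odd m)
    (hbraid : altProd a b m = altProd b a m) : SemiconjBy (altProd a b m) b a := by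
  calc altProd a b m * b = altProd a b (m + 1) := by
        rw [altProd_succ_right, if_neg (Nat.not_even_iff_odd.mpr hm)]
    _ = a * altProd a b m := by rw [altProd_succ_left, hbraid]

end altProd

section Quadratic

variable {F A : Type*} [Field F] [Ring A] [Algebra F A]

theorem isUnit_of_quadratic {x : A} {q : F} (hq : q ≠ 0)
    (h : (x - 1) * (x + algebraMap F A q) = 0) : IsUnit x := by
  have hfactor : x * (x + algebraMap F A q - 1) = algebraMap F A q := by
    rw [← sub_eq_zero, ← h]
    noncomm_ring
  have hcomm : Commute x (x + algebraMap F A q - 1) :=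
    ((Commute.refl x).add_right (Algebra.commute_algebraMap_right q x)).sub_right (.one_right x)
  have hunit : IsUnit (algebraMap F A q) := (isUnit_iff_ne_zero.mpr hq).map _
  rw [← hfactor] at hunit
  exact (hcomm.isUnit_mul_iff.mp hunit).1

theorem eq_one_of_quadratic_of_quadratic {x : A} {q q' : F} (hne : q ≠ q')
    (h : (x - 1) * (x + algebraMap F A q) = 0) (h' : (x - 1) * (x + algebraMap F A q') = 0) :
    x = 1 := by
  have hdiff : (x - 1) * algebraMap F A (q - q') = 0 := by
    rw [map_sub, ← sub_self (0 : A)]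
    nth_rw 1 [← h]
    rw [← h']
    noncomm_ring
  have hunit : IsUnit (algebraMap F A (q - q')) := (isUnit_iff_ne_zero.mpr (sub_ne_zero.mpr hne)).map _
  exact sub_eq_zero.mp (hunit.mul_left_eq_zero.mp hdiff)

theorem SemiconjBy.quadratic {w x y : A} (h : SemiconjBy w x y) (q : F) :
    SemiconjBy w ((x - 1) * (x + algebraMap F A q)) ((y - 1) * (y + algebraMap F A q)) :=
  (h.sub_right (.one_right w)).mul_right (h.add_right (Algebra.commute_algebraMap_right q w))

end Quadratic

theorem hecke_collapse_general (F : Type*) [Field F] (A : Type*) [Ring A] [Algebra F A]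
    (Ts Tt : A) (qs qt : F) (hqs : qs ≠ 0) (hqt : qt ≠ 0) (hne : qs ≠ qt)
    (m : ℕ) (hodd : Odd m)
    (hs : (Ts - 1) * (Ts + algebraMap F A qs) = 0)
    (ht : (Tt - 1) * (Tt + algebraMap F A qt) = 0)
    (hbraid : altProd Ts Tt m = altProd Tt Ts m) :
    Ts = 1 ∧ Tt = 1 := by
  set w := altProd Ts Tt m
  have hw : IsUnit w := (isUnit_of_quadratic hqs hs).altProd (isUnit_of_quadratic hqt ht) m
  have hconj : SemiconjBy w Tt Ts := semiconjBy_altProd_of_braid hodd hbraid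
  have hs' : (Ts - 1) * (Ts + algebraMap F A qt) = 0 := by
    have := hconj.quadratic qt
    rwa [SemiconjBy, ht, mul_zero, eq_comm, hw.mul_left_eq_zero] at this
  have hTs : Ts = 1 := eq_one_of_quadratic_of_quadratic hne hs hs'
  refine ⟨hTs, hw.mul_left_cancel ?_⟩
  rw [hconj.eq, hTs, one_mul, mul_one]

/-- Collapse: if `T_s, T_t` satisfy quadratic relations with distinct nonzero
parameters `q_s ≠ q_t` and the braid relation for an odd `m ≥ 3`, then
`T_s = T_t = 1`. -/
theorem hecke_collapse (F : Type*) [Field F] (A : Type*) [Ring A] [Algebra F A]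
    (Ts Tt : A) (qs qt : F) (hqs : qs ≠ 0) (hqt : qt ≠ 0) (hne : qs ≠ qt)
    (m : ℕ) (hm : 3 ≤ m) (hodd : Odd m)
    (hs : (Ts - 1) * (Ts + algebraMap F A qs) = 0)
    (ht : (Tt - 1) * (Tt + algebraMap F A qt) = 0)
    (hbraid : altProd Ts Tt m = altProd Tt Ts m) :
    Ts = 1 ∧ Tt = 1 :=
  hecke_collapse_general F A Ts Tt qs qt hqs hqt hne m hodd hs ht hbraid
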